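/- The set of classically unsatisfiable first-order sentences in the full vocabulary is Σ₁-hard: for every recursively enumerable set A ⊆ ℕ (i.e., A is the domain of a partial computable function), A is many-one reducible to the set of natural-number codes (under a fixed computable encoding of sentences) of sentences of L that have no model, where L is the first-order language with countably many function symbols of every arity and countably many relation symbols of every arity. -/

import Mathlib

/-!
Primitive recursive functions are named by syntax trees `t`; each tree gets a function symbol
`F_t` and a sentence `Ax_t` made of the defining equations of its composition and recursion
nodes. In every model of `Ax_t` the symbol `F_t` computes `t` on numerals, and `ℕ`, with every
`F_t` read as `t`, is a model of all of them. By step-bounded evaluation an r.e. set is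
`{k | ∃ m, d k m = 0}` for a primitive recursive `d`; for a tree `T` of `d` the sentence
`Ax_T ∧ ∀ x, F_T(k̄, x) ≠ 0` is then unsatisfiable iff `k ∈ A`: a witness `m` refutes it at
`x = m̄`, and otherwise `ℕ` is a model. Since `k` enters only through the numeral `k̄ = Sᵏ 0`,
the code of this sentence is a primitive recursive function of `k`.
-/

open FirstOrder

/-- The full vocabulary: countably many function symbols of every arity and countably
many relation symbols of every arity. -/
def fullLang : FirstOrder.Language where
  Functions := fun _ => ℕ
  Relations := fun _ => ℕ

instance : Encodable (Σ i, fullLang.Functions i) :=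
  inferInstanceAs (Encodable (Σ _ : ℕ, ℕ))

instance : Encodable (Σ i, fullLang.Relations i) :=
  inferInstanceAs (Encodable (Σ _ : ℕ, ℕ))

/-- A fixed computable encoding of sentences of the full vocabulary by natural numbers,
obtained by encoding the list of symbols of the sentence. -/
def sentenceCode (φ : fullLang.Sentence) : ℕ :=
  Encodable.encode (Language.BoundedFormula.listEncode φ)

open Language Structure

theorem Fin.map_cons {n : ℕ} {α β : Type*} (g : α → β) (a : α) (f : Fin n → α) :
    (fun i => g ((Fin.cons a f : Fin (n + 1) → α) i)) = Fin.cons (g a) fun i => g (f i) :=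
  Fin.comp_cons g a f

namespace FirstOrder.Language.Sentence

variable {L : Language} {M : Type*} [L.Structure M]

theorem realize_iInf {β : Type*} [Finite β] (f : β → L.Sentence) :
    M ⊨ Formula.iInf f ↔ ∀ b, M ⊨ f b :=
  Formula.realize_iInf

theorem realize_alls_bdEqual {n : ℕ} (t₁ t₂ : L.Term (Empty ⊕ Fin n)) :
    M ⊨ (t₁ =' t₂).alls ↔
      ∀ xs : Fin n → M, t₁.realize (Sum.elim default xs) = t₂.realize (Sum.elim default xs) := by
  simp only [Sentence.Realize, BoundedFormula.realize_alls, BoundedFormula.realize_bdEqual]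

end FirstOrder.Language.Sentence

section Encoding

open Encodable

variable {β : Type*} [Encodable β]

theorem primrec_encode_cons {x : ℕ → β} {l : ℕ → List β} (hx : Primrec fun k => encode (x k))
    (hl : Primrec fun k => encode (l k)) : Primrec fun k => encode (x k :: l k) :=
  (Primrec.succ.comp (Primrec₂.natPair.comp hx hl)).of_eq fun _ => (encode_list_cons _ _).symm

theorem primrec_encode_append_left (p : List β) {l : ℕ → List β}
    (hl : Primrec fun k => encode (l k)) : Primrec fun k => encode (p ++ l k) := by
  induction p with
  | nil => exact hl
  | cons a p ih => exact primrec_encode_cons (Primrec.const (encode a)) ih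

theorem primrec_encode_replicate_append (a : β) (s : List β) :
    Primrec fun k => encode (List.replicate k a ++ s) := by
  have hiter : Primrec fun k => (fun m => Nat.pair (encode a) m + 1)^[k] (encode s) :=
    Primrec.nat_iterate Primrec.id (Primrec.const _)
      (Primrec.succ.comp (Primrec₂.natPair.comp (Primrec.const _) Primrec.snd)).to₂
  refine hiter.of_eq fun k => ?_
  induction k with
  | zero => rfl
  | succ k ih =>
    rw [Function.iterate_succ_apply', ih, List.replicate_succ, List.cons_append, encode_list_cons]

end Encoding

theorem Partrec.exists_primrec₂_dom_iff {f : ℕ →. ℕ} (hf : Partrec f) :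
    ∃ d : ℕ → ℕ → ℕ, Primrec₂ d ∧ ∀ k, (f k).Dom ↔ ∃ m, d k m = 0 := by
  obtain ⟨c, rfl⟩ := Nat.Partrec.Code.exists_code.1 (Partrec.nat_iff.1 hf)
  refine ⟨fun k m => bif (c.evaln m k).isSome then 0 else 1, ?_, fun k => ?_⟩
  · exact (Primrec.cond (Primrec.option_isSome.comp (Nat.Partrec.Code.primrec_evaln.comp
      ((Primrec.snd.pair (Primrec.const c)).pair Primrec.fst))) (Primrec.const 0)
      (Primrec.const 1)).to₂
  · simp only [Part.dom_iff_mem, Nat.Partrec.Code.evaln_complete, Option.mem_def,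
      Bool.cond_eq_ite, ite_eq_left_iff, one_ne_zero, imp_false, not_not,
      Option.isSome_iff_exists]
    exact exists_comm

theorem sentenceCode_injective : Function.Injective sentenceCode := fun φ ψ h => by
  have := BoundedFormula.listEncode_sigma_injective (α := Empty)
    (a₁ := ⟨0, φ⟩) (a₂ := ⟨0, ψ⟩) (Encodable.encode_injective h)
  exact eq_of_heq (Sigma.mk.inj_iff.1 this).2

inductive PrimrecTree : ℕ → Type
  | zero : PrimrecTree 0
  | succ : PrimrecTree 1
  | get {n : ℕ} (i : Fin n) : PrimrecTree n
  | comp {m n : ℕ} (f : PrimrecTree n) (g : Fin n → PrimrecTree m) : PrimrecTree m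
  | prec {n : ℕ} (f : PrimrecTree n) (g : PrimrecTree (n + 2)) : PrimrecTree (n + 1)

namespace PrimrecTree

variable {n : ℕ}

def eval : ∀ {n : ℕ}, PrimrecTree n → (Fin n → ℕ) → ℕ
  | _, zero, _ => 0
  | _, succ, v => v 0 + 1
  | _, get i, v => v i
  | _, comp f g, v => f.eval fun i => (g i).eval v
  | _, prec f g, v =>
      (v 0).rec (f.eval (Fin.tail v)) fun y r => g.eval (Fin.cons y (Fin.cons r (Fin.tail v)))

theorem eval_prec_zero (f : PrimrecTree n) (g : PrimrecTree (n + 2)) (v : Fin n → ℕ) :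
    (prec f g).eval (Fin.cons 0 v) = f.eval v :=
  rfl

theorem eval_prec_succ (f : PrimrecTree n) (g : PrimrecTree (n + 2)) (y : ℕ) (v : Fin n → ℕ) :
    (prec f g).eval (Fin.cons (y + 1) v) =
      g.eval (Fin.cons y (Fin.cons ((prec f g).eval (Fin.cons y v)) v)) :=
  rfl

def code : ∀ {n : ℕ}, PrimrecTree n → ℕ
  | _, zero => Nat.pair 0 0
  | _, succ => Nat.pair 1 0
  | n, get i => Nat.pair 2 (Nat.pair n i)
  | _, comp (n := n) f g =>
      Nat.pair 3 (Nat.pair n (Nat.pair f.code (Encodable.encode (List.ofFn fun i => (g i).code))))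
  | _, prec f g => Nat.pair 4 (Nat.pair f.code g.code)

theorem code_injective : Function.Injective (code : PrimrecTree n → ℕ) := by
  intro t t' h
  induction t with
  | zero | succ | get => cases t' <;> simp_all [code, Nat.pair_eq_pair, Fin.ext_iff]
  | comp f g ihf ihg =>
    cases t' <;> simp only [code, Nat.pair_eq_pair] at h <;> try omega
    obtain ⟨-, rfl, hf, hg⟩ := h
    have hcodes := List.ofFn_inj.1 (Encodable.encode_injective hg)
    rw [ihf hf, funext fun i => ihg i (congrFun hcodes i)]
  | prec f g ihf ihg =>
    cases t' <;> simp only [code, Nat.pair_eq_pair] at h <;> try omega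
    rw [ihf h.2.1, ihg h.2.2]

end PrimrecTree

theorem Nat.Primrec'.exists_primrecTree {n : ℕ} {f : List.Vector ℕ n → ℕ}
    (hf : Nat.Primrec' f) : ∃ t : PrimrecTree n, ∀ v, t.eval v = f (List.Vector.ofFn v) := by
  induction hf with
  | zero => exact ⟨.zero, fun _ => rfl⟩
  | succ => exact ⟨.succ, fun _ => rfl⟩
  | get i => exact ⟨.get i, fun v => (List.Vector.get_ofFn v i).symm⟩
  | comp g _ _ hf hg =>
    obtain ⟨tf, htf⟩ := hf
    choose tg htg using hg
    exact ⟨.comp tf tg, fun v => by simp [PrimrecTree.eval, htf, htg]⟩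
  | prec _ _ hf hg =>
    obtain ⟨tf, htf⟩ := hf
    obtain ⟨tg, htg⟩ := hg
    exact ⟨.prec tf tg, fun v => by simp [PrimrecTree.eval, htf, htg]; rfl⟩

theorem Primrec₂.exists_primrecTree {d : ℕ → ℕ → ℕ} (hd : Primrec₂ d) :
    ∃ T : PrimrecTree 2, ∀ k m, T.eval ![k, m] = d k m :=
  let ⟨T, hT⟩ := (Nat.Primrec'.prim_iff₂.2 hd).exists_primrecTree
  ⟨T, fun k m => hT ![k, m]⟩

namespace PrimrecTree

variable {n : ℕ}

def sym (t : PrimrecTree n) : fullLang.Functions n := t.code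

def numeral {α : Type} : ℕ → fullLang.Term α
  | 0 => Term.func (sym zero) ![]
  | k + 1 => Term.func (sym succ) fun _ => numeral k

def numeralVal (M : Type) [fullLang.Structure M] : ℕ → M
  | 0 => funMap (sym zero) ![]
  | k + 1 => funMap (sym succ) fun _ => numeralVal M k

-- `zero` and `succ` need no axioms: numerals are built from their symbols.
noncomputable def axioms : ∀ {n : ℕ}, PrimrecTree n → fullLang.Sentence
  | _, zero => ⊤
  | _, succ => ⊤
  | _, get i => (Term.func (sym (get i)) (&·) =' &i).alls
  | _, comp f g =>
      (Term.func (sym (comp f g)) (&·) =' Term.func (sym f) fun i =>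
          Term.func (sym (g i)) (&·)).alls ⊓
        (f.axioms ⊓ Formula.iInf fun i => (g i).axioms)
  | _, prec f g =>
      (Term.func (sym (prec f g)) (Fin.cons (numeral 0) (&·)) =' Term.func (sym f) (&·)).alls ⊓
      (Term.func (sym (prec f g)) (Fin.cons (Term.func (sym succ) fun _ => &0) fun i => &i.succ) ='
        Term.func (sym g)
          (Fin.cons (&0) (Fin.cons (Term.func (sym (prec f g)) (&·)) fun i => &i.succ))).alls ⊓
        (f.axioms ⊓ g.axioms)

section Model

variable {M : Type} [fullLang.Structure M]

@[simp]
theorem funMap_sym_succ (k : ℕ) :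
    funMap (sym succ) (fun _ => numeralVal M k) = numeralVal M (k + 1) :=
  rfl

@[simp]
theorem realize_numeral {α : Type} (v : α → M) (k : ℕ) :
    (numeral k).realize v = numeralVal M k := by
  induction k with
  | zero => simp only [numeral, numeralVal, Term.realize_func]; congr; ext i; exact i.elim0
  | succ k ih => simp only [numeral, numeralVal, Term.realize_func, ih]

def CorrectOnNumerals (M : Type) [fullLang.Structure M] (t : PrimrecTree n) : Prop :=
  ∀ v : Fin n → ℕ, funMap (sym t) (fun i => numeralVal M (v i)) = numeralVal M (t.eval v)

theorem correctOnNumerals_comp {m : ℕ} {f : PrimrecTree n} {g : Fin n → PrimrecTree m}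
    (h : M ⊨ (comp f g).axioms) (hf : CorrectOnNumerals M f)
    (hg : ∀ i, CorrectOnNumerals M (g i)) : CorrectOnNumerals M (comp f g) := by
  intro v
  rw [axioms, Sentence.realize_inf, Sentence.realize_alls_bdEqual] at h
  have hdef := h.1 fun i => numeralVal M (v i)
  simp only [Term.realize_func, Term.realize_var, Function.comp_apply, Sum.elim_inr] at hdef
  rw [hdef, eval, ← hf]
  exact congrArg _ (funext fun i => hg i v)

theorem correctOnNumerals_prec {f : PrimrecTree n} {g : PrimrecTree (n + 2)}
    (h : M ⊨ (prec f g).axioms) (hf : CorrectOnNumerals M f) (hg : CorrectOnNumerals M g) :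
    CorrectOnNumerals M (prec f g) := by
  rw [axioms, Sentence.realize_inf, Sentence.realize_inf, Sentence.realize_alls_bdEqual,
    Sentence.realize_alls_bdEqual] at h
  obtain ⟨⟨hzero, hsucc⟩, -⟩ := h
  suffices key : ∀ y w, funMap (sym (prec f g))
      (fun i => numeralVal M ((Fin.cons y w : Fin (n + 1) → ℕ) i)) =
        numeralVal M ((prec f g).eval (Fin.cons y w)) by
    intro v
    simpa only [Fin.cons_self_tail] using key (v 0) (Fin.tail v)
  intro y w
  simp only [Fin.map_cons]
  induction y with
  | zero =>
    have := hzero fun i => numeralVal M (w i)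
    simp only [Term.realize_func, realize_numeral, Fin.map_cons, Term.realize_var,
      Function.comp_apply, Sum.elim_inr] at this
    rw [this, eval_prec_zero, ← hf]
  | succ y ih =>
    have := hsucc (Fin.cons (numeralVal M y) fun i => numeralVal M (w i))
    simp only [Term.realize_func, Term.realize_var, Function.comp_apply, Sum.elim_inr,
      Fin.map_cons, Fin.cons_zero, Fin.cons_succ, funMap_sym_succ] at this
    rw [this, ih, eval_prec_succ, ← hg]
    simp only [Fin.map_cons]

theorem correctOnNumerals_of_realize_axioms (t : PrimrecTree n) (h : M ⊨ t.axioms) :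
    CorrectOnNumerals M t := by
  induction t with
  | zero => exact fun _ => congrArg _ (Subsingleton.elim _ _)
  | succ => exact fun v => congrArg _ (funext fun i => by fin_cases i; rfl)
  | get i =>
    rw [axioms, Sentence.realize_alls_bdEqual] at h
    exact fun v => by simpa [eval] using h (fun i => numeralVal M (v i))
  | comp f g ihf ihg =>
    have hfg := h
    simp only [axioms, Sentence.realize_inf, Sentence.realize_iInf] at hfg
    exact correctOnNumerals_comp h (ihf hfg.2.1) fun i => ihg i (hfg.2.2 i)
  | prec f g ihf ihg =>
    have hfg := h
    simp only [axioms, Sentence.realize_inf] at hfg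
    exact correctOnNumerals_prec h (ihf hfg.2.1) (ihg hfg.2.2)

end Model

noncomputable instance natStructure : fullLang.Structure ℕ where
  funMap {n} s v := (Function.partialInv (code : PrimrecTree n → ℕ) s).elim 0 (·.eval v)
  RelMap _ _ := False

@[simp]
theorem funMap_sym_nat (t : PrimrecTree n) (v : Fin n → ℕ) : funMap (sym t) v = t.eval v := by
  show (Function.partialInv code t.code).elim 0 _ = _
  rw [Function.partialInv_left code_injective]
  rfl

@[simp]
theorem numeralVal_nat (k : ℕ) : numeralVal ℕ k = k := by
  induction k with
  | zero => simp [numeralVal, eval]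
  | succ k ih => simp [numeralVal, eval, ih]

theorem realize_axioms_nat (t : PrimrecTree n) : ℕ ⊨ t.axioms := by
  induction t with
  | zero | succ => exact Sentence.realize_top ℕ
  | get i => simp [axioms, Sentence.realize_alls_bdEqual, eval]
  | comp f g ihf ihg =>
    simp [axioms, Sentence.realize_alls_bdEqual, Sentence.realize_iInf, eval, ihf, ihg]
  | prec f g ihf ihg =>
    simp only [axioms, Sentence.realize_inf, Sentence.realize_alls_bdEqual, ihf, ihg, and_true]
    constructor <;> intro xs <;> simp [Fin.map_cons] <;> rfl

def zeroTestTerm (T : PrimrecTree 2) (k : ℕ) : fullLang.Term (Empty ⊕ Fin 1) :=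
  Term.func (sym T) ![numeral k, &0]

noncomputable def neverZeroSentence (T : PrimrecTree 2) (k : ℕ) : fullLang.Sentence :=
  T.axioms ⊓ ∀' ∼(zeroTestTerm T k =' numeral 0)

theorem realize_neverZeroSentence {M : Type} [fullLang.Structure M] (T : PrimrecTree 2) (k : ℕ) :
    M ⊨ neverZeroSentence T k ↔
      M ⊨ T.axioms ∧ ∀ x : M, funMap (sym T) ![numeralVal M k, x] ≠ numeralVal M 0 := by
  rw [neverZeroSentence, Sentence.realize_inf]
  refine and_congr_right' (forall_congr' fun x => not_congr ?_)
  rw [BoundedFormula.realize_bdEqual, zeroTestTerm, Term.realize_func, realize_numeral]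
  congr! 2
  ext i
  fin_cases i <;> simp [Fin.snoc]

theorem not_satisfiable_neverZeroSentence_iff (T : PrimrecTree 2) (k : ℕ) :
    (¬ ∃ (M : Type) (_ : fullLang.Structure M) (_ : Nonempty M), M ⊨ neverZeroSentence T k) ↔
      ∃ m, T.eval ![k, m] = 0 := by
  constructor
  · intro h
    by_contra! hm
    exact h ⟨ℕ, inferInstance, ⟨0⟩,
      (realize_neverZeroSentence T k).2 ⟨realize_axioms_nat T, by simpa using hm⟩⟩
  · rintro ⟨m, hm⟩ ⟨M, _, _, hM⟩
    obtain ⟨hax, hne⟩ := (realize_neverZeroSentence T k).1 hM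
    apply hne (numeralVal M m)
    have := correctOnNumerals_of_realize_axioms T hax ![k, m]
    rw [hm] at this
    convert this using 2
    ext i
    fin_cases i <;> rfl

open Encodable

theorem listEncode_numeral {α : Type} (k : ℕ) :
    (numeral k : fullLang.Term α).listEncode =
      List.replicate k (Sum.inr ⟨1, sym succ⟩) ++ [Sum.inr ⟨0, sym zero⟩] := by
  induction k with
  | zero => rfl
  | succ k ih => simp [numeral, Term.listEncode, ih, List.replicate_succ, List.finRange_succ]

theorem listEncode_zeroTestTerm (T : PrimrecTree 2) (k : ℕ) :
    (zeroTestTerm T k).listEncode =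
      Sum.inr ⟨2, sym T⟩ :: (List.replicate k (Sum.inr ⟨1, sym succ⟩) ++
        [Sum.inr ⟨0, sym zero⟩, Sum.inl (Sum.inr 0)]) := by
  simp [zeroTestTerm, Term.listEncode, listEncode_numeral, List.finRange_succ]

theorem exists_listEncode_neverZeroSentence (T : PrimrecTree 2) :
    ∃ p s, ∀ k, (neverZeroSentence T k).listEncode = p ++ Sum.inl ⟨1, zeroTestTerm T k⟩ :: s :=
  ⟨[Sum.inr (Sum.inr 0), Sum.inr (Sum.inr 0)] ++ T.axioms.listEncode ++
      [Sum.inr (Sum.inr 0), Sum.inr (Sum.inr 1), Sum.inr (Sum.inr 0)],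
    [Sum.inl ⟨1, numeral 0⟩, Sum.inr (Sum.inr 3), Sum.inr (Sum.inr 2), Sum.inr (Sum.inr 2)],
    fun k => by
      simp [neverZeroSentence, Min.min, BoundedFormula.not, BoundedFormula.listEncode,
        Term.bdEqual]⟩

theorem primrec_encode_zeroTestTerm (T : PrimrecTree 2) :
    Primrec fun k => encode (zeroTestTerm T k) :=
  (primrec_encode_cons (Primrec.const _) (primrec_encode_replicate_append _ _)).of_eq
    fun k => by rw [← listEncode_zeroTestTerm]; rfl

theorem primrec_sentenceCode_neverZeroSentence (T : PrimrecTree 2) :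
    Primrec fun k => sentenceCode (neverZeroSentence T k) := by
  obtain ⟨p, s, hps⟩ := exists_listEncode_neverZeroSentence T
  have hsym : Primrec fun k => encode (Sum.inl ⟨1, zeroTestTerm T k⟩ :
      (Σ k, fullLang.Term (Empty ⊕ Fin k)) ⊕ ((Σ n, fullLang.Relations n) ⊕ ℕ)) :=
    (Primrec.nat_mul.comp (Primrec.const 2)
      (Primrec₂.natPair.comp (Primrec.const 1) (primrec_encode_zeroTestTerm T))).of_eq
      fun k => by rw [encode_inl, encode_sigma_val]; rfl
  exact (primrec_encode_append_left p (primrec_encode_cons hsym (Primrec.const _))).of_eq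
    fun k => by rw [sentenceCode, hps]

end PrimrecTree

/-- The set of codes of classically unsatisfiable sentences of the full vocabulary is
`Σ₁`-hard: every recursively enumerable `A ⊆ ℕ` is many-one reducible to it. -/
theorem unsat_sigma1_hard (A : Set ℕ)
    (hA : ∃ f : ℕ →. ℕ, Partrec f ∧ ∀ k, k ∈ A ↔ (f k).Dom) :
    ManyOneReducible (· ∈ A)
      (fun k : ℕ => ∃ φ : fullLang.Sentence, sentenceCode φ = k ∧
        ¬ ∃ (M : Type) (_ : fullLang.Structure M) (_ : Nonempty M),
          Language.Sentence.Realize M φ) := by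
  obtain ⟨f, hf, hA⟩ := hA
  obtain ⟨d, hd, hdom⟩ := hf.exists_primrec₂_dom_iff
  obtain ⟨T, hT⟩ := hd.exists_primrecTree
  refine ⟨fun k => sentenceCode (T.neverZeroSentence k),
    (T.primrec_sentenceCode_neverZeroSentence).to_comp, fun k => ?_⟩
  simp only [hA, hdom, sentenceCode_injective.eq_iff, exists_eq_left,
    T.not_satisfiable_neverZeroSentence_iff, hT]
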